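/- For every n ≥ 1, over the alphabet Σ_n = {a_1,…,a_n}, the downward-closed language Σ_n* \ U_n of all words that do not use all n letters is recognized by an NFA with n states (so nN(Σ_n* \ U_n) ≤ n), while every unambiguous finite automaton recognizing it has at least 2^n − 1 states; in fact nU(Σ_n* \ U_n) = nD(Σ_n* \ U_n) = 2^n − 1. -/

import Mathlib

/-- An accepting run of an NFA on a word `w`: a sequence of `|w|+1` states starting
in an initial state, ending in an accepting state, and following the transitions. -/
def NFA.IsAcceptingRun {α σ : Type*} (M : NFA α σ) (w : List α)
    (r : Fin (w.length + 1) → σ) : Prop :=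
  r 0 ∈ M.start ∧ r (Fin.last w.length) ∈ M.accept ∧
    ∀ i : Fin w.length, r i.succ ∈ M.step (r i.castSucc) (w.get i)

/-- An NFA is unambiguous (a UFA) if every word has at most one accepting run. -/
def NFA.Unambiguous {α σ : Type*} (M : NFA α σ) : Prop :=
  ∀ (w : List α) (r₁ r₂ : Fin (w.length + 1) → σ),
    M.IsAcceptingRun w r₁ → M.IsAcceptingRun w r₂ → r₁ = r₂

/-- A deterministic NFA (a DFA with a possibly partial transition function):
exactly one initial state and at most one successor per state and letter. -/
def NFA.Deterministic {α σ : Type*} (M : NFA α σ) : Prop :=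
  (∃ q₀, M.start = {q₀}) ∧ ∀ q a, (M.step q a).Subsingleton

/-- Minimal number of states of an NFA recognizing `L` (`nN(L)`). -/
noncomputable def nN {α : Type} (L : Language α) : ℕ :=
  sInf {n | ∃ (σ : Type) (inst : Fintype σ) (M : NFA α σ),
    @Fintype.card σ inst = n ∧ M.accepts = L}

/-- Minimal number of states of a DFA (partial transition function allowed)
recognizing `L` (`nD(L)`). -/
noncomputable def nD {α : Type} (L : Language α) : ℕ :=
  sInf {n | ∃ (σ : Type) (inst : Fintype σ) (M : NFA α σ),
    M.Deterministic ∧ @Fintype.card σ inst = n ∧ M.accepts = L}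

/-- Minimal number of states of an unambiguous NFA recognizing `L` (`nU(L)`). -/
noncomputable def nU {α : Type} (L : Language α) : ℕ :=
  sInf {n | ∃ (σ : Type) (inst : Fintype σ) (M : NFA α σ),
    M.Unambiguous ∧ @Fintype.card σ inst = n ∧ M.accepts = L}

/-- Upward closure: all superwords (w.r.t. the scattered-subword ordering
`List.Sublist`) of words of `L`. -/
def upClosure {α : Type} (L : Language α) : Language α := {x | ∃ y ∈ L, y.Sublist x}

/-- Downward closure: all subwords of words of `L`. -/
def downClosure {α : Type} (L : Language α) : Language α := {x | ∃ y ∈ L, x.Sublist y}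

/-- Upward interior: words all of whose superwords are in `L`. -/
def upInterior {α : Type} (L : Language α) : Language α := {x | ∀ y, x.Sublist y → y ∈ L}

/-- Downward interior: words all of whose subwords are in `L`. -/
def downInterior {α : Type} (L : Language α) : Language α := {x | ∀ y, y.Sublist x → y ∈ L}

/-!
Let `M` be an unambiguous automaton, `u_x` the indicator vector of the states reached on `x` and
`v_y` that of the states from which `y` is accepted. Two distinct states counted in `u_x · v_y`
would give two accepting runs on `xy`, so `u_x · v_y = [xy ∈ L(M)]` and every matrix
`([x_i y_j ∉ L(M)])_{i,j} = J - (u_{x_i} · v_{y_j})` has rank at most `|Q| + 1`.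
For `L = Σ* \ U` take `x_s`, `y_t` to list the letters of subsets `s`, `t ⊆ Σ`: the rejection
matrix is `[s ∪ t = Σ]`, i.e. `[tᶜ ⊆ s]` up to a permutation of columns. This zeta matrix of the
Boolean lattice is unitriangular in colex order, so it has full rank `2^|Σ|`, whence
`|Q| ≥ 2^|Σ| - 1`. A DFA remembering the (proper) set of letters read so far attains the bound,
and guessing the missing letter gives an NFA with `|Σ|` states.
-/

open Finset Matrix

namespace NFA

variable {α σ : Type*} {M : NFA α σ}

namespace Path

def toRun {s t : σ} {x : List α} : M.Path s t x → Fin (x.length + 1) → σ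
  | nil s => fun _ => s
  | cons _ s _ _ _ _ p => Fin.cons s p.toRun

def append {s t u : σ} {x y : List α} : M.Path s t x → M.Path t u y → M.Path s u (x ++ y)
  | nil _, p' => p'
  | cons t' s _ a _ h p, p' => cons t' s _ a _ h (p.append p')

variable {s t u : σ} {x y : List α}

theorem toRun_zero (p : M.Path s t x) : p.toRun 0 = s := by
  cases p <;> rfl

theorem toRun_last (p : M.Path s t x) : p.toRun (Fin.last x.length) = t := by
  induction p with
  | nil => rfl
  | cons _ _ _ _ _ _ p ih => exact ih

theorem toRun_succ_mem_step (p : M.Path s t x) (i : Fin x.length) :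
    p.toRun i.succ ∈ M.step (p.toRun i.castSucc) (x.get i) := by
  induction p with
  | nil => exact i.elim0
  | cons t s u a x h p ih =>
    cases i using Fin.cases with
    | zero => simpa [toRun, toRun_zero] using h
    | succ i => simpa [toRun] using ih i

theorem toRun_append_length (p : M.Path s t x) (p' : M.Path t u y) :
    (p.append p').toRun ⟨x.length, by simp⟩ = t := by
  induction p with
  | nil => exact toRun_zero p'
  | cons _ _ _ _ _ _ p ih => exact ih _

theorem isAcceptingRun_toRun (p : M.Path s t x) (hs : s ∈ M.start) (ht : t ∈ M.accept) :
    M.IsAcceptingRun x p.toRun :=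
  ⟨by rwa [toRun_zero], by rwa [toRun_last], p.toRun_succ_mem_step⟩

end Path

theorem append_mem_accepts_iff {x y : List α} :
    x ++ y ∈ M.accepts ↔ ∃ q ∈ M.eval x, y ∈ M.acceptsFrom {q} := by
  rw [accepts_eq_acceptsFrom_start, append_mem_acceptsFrom]
  simp only [mem_acceptsFrom, mem_evalFrom_iff_exists (S := M.evalFrom _ x)]
  exact ⟨fun ⟨t, ht, q, hq, hqt⟩ => ⟨q, hq, t, ht, hqt⟩,
    fun ⟨q, hq, t, ht, hqt⟩ => ⟨t, ht, q, hq, hqt⟩⟩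

theorem exists_isAcceptingRun_of_mem_eval {x y : List α} {q : σ} (hx : q ∈ M.eval x)
    (hy : y ∈ M.acceptsFrom {q}) :
    ∃ r, M.IsAcceptingRun (x ++ y) r ∧ r ⟨x.length, by simp⟩ = q := by
  obtain ⟨s, hs, hsq⟩ := mem_evalFrom_iff_exists.1 hx
  obtain ⟨t, ht, hqt⟩ := hy
  obtain ⟨p⟩ := mem_evalFrom_iff_nonempty_path.1 hsq
  obtain ⟨p'⟩ := mem_evalFrom_iff_nonempty_path.1 hqt
  exact ⟨_, (p.append p').isAcceptingRun_toRun hs ht, p.toRun_append_length p'⟩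

theorem Unambiguous.eq_of_mem_eval_of_mem_acceptsFrom (hM : M.Unambiguous) {x y : List α}
    {q₁ q₂ : σ} (hx₁ : q₁ ∈ M.eval x) (hx₂ : q₂ ∈ M.eval x) (hy₁ : y ∈ M.acceptsFrom {q₁})
    (hy₂ : y ∈ M.acceptsFrom {q₂}) : q₁ = q₂ := by
  obtain ⟨r₁, hr₁, rfl⟩ := exists_isAcceptingRun_of_mem_eval hx₁ hy₁
  obtain ⟨r₂, hr₂, rfl⟩ := exists_isAcceptingRun_of_mem_eval hx₂ hy₂
  rw [hM _ _ _ hr₁ hr₂]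

theorem Deterministic.unambiguous (hM : M.Deterministic) : M.Unambiguous := by
  obtain ⟨⟨q₀, hq₀⟩, hstep⟩ := hM
  rintro w r₁ r₂ ⟨hs₁, -, ht₁⟩ ⟨hs₂, -, ht₂⟩
  funext i
  induction i using Fin.induction with
  | zero => rw [hq₀] at hs₁ hs₂; rw [hs₁, hs₂]
  | succ j ih => exact hstep _ _ (ht₁ j) (ih ▸ ht₂ j)

open scoped Classical in
theorem Unambiguous.rank_ite_append_mem_accepts_le [Fintype σ] {ι κ : Type*} [Fintype κ]
    (K : Type*) [Field K] (hM : M.Unambiguous) (x : ι → List α) (y : κ → List α) :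
    (Matrix.of fun i j => if x i ++ y j ∈ M.accepts then (0 : K) else 1).rank ≤
      Fintype.card σ + 1 := by
  let U : Matrix ι σ K := .of fun i q => if q ∈ M.eval (x i) then 1 else 0
  let V : Matrix σ κ K := .of fun q j => if y j ∈ M.acceptsFrom {q} then 1 else 0
  have hUV (i j) : (U * V) i j = if x i ++ y j ∈ M.accepts then 1 else 0 := by
    simp only [U, V, mul_apply, of_apply, ← ite_and, mul_ite, mul_one, mul_zero]
    split_ifs with hacc
    · obtain ⟨q, hq, hyq⟩ := append_mem_accepts_iff.1 hacc
      rw [Finset.sum_eq_single q (fun q' _ hq' => if_neg fun h => hq'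
        (hM.eq_of_mem_eval_of_mem_acceptsFrom h.2 hq h.1 hyq)) (by simp), if_pos ⟨hyq, hq⟩]
    · exact Finset.sum_eq_zero fun q _ => if_neg fun h => hacc
        (append_mem_accepts_iff.2 ⟨q, h.2, h.1⟩)
  have hfactor : (Matrix.of fun i j => if x i ++ y j ∈ M.accepts then (0 : K) else 1) =
      fromCols (Matrix.of fun (_ : ι) (_ : Unit) => (1 : K)) U *
        fromRows (Matrix.of fun (_ : Unit) (_ : κ) => (1 : K)) (-V) := by
    rw [fromCols_mul_fromRows, Matrix.mul_neg, ← sub_eq_add_neg]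
    ext i j
    rw [Matrix.sub_apply, hUV, mul_apply]
    split_ifs with h <;> simp [h]
  rw [hfactor]
  calc _ ≤ Fintype.card (Unit ⊕ σ) := (rank_mul_le_left _ _).trans (rank_le_card_width _)
    _ = _ := by simp [add_comm]

end NFA

open Finset.Colex in
theorem rank_ite_union_eq_univ (K : Type*) [Field K] (α : Type*) [Fintype α] [LinearOrder α] :
    (Matrix.of fun s t : Finset α => if s ∪ t = univ then (1 : K) else 0).rank =
      2 ^ Fintype.card α := by
  let : Fintype (Colex (Finset α)) := .ofEquiv _ toColex
  let Z : Matrix (Colex (Finset α)) (Colex (Finset α)) K :=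
    .of fun s t => if ofColex t ⊆ ofColex s then 1 else 0
  have hZ : Z.IsLowerTriangular := fun s t hst => if_neg fun h =>
    (not_le.2 hst) (toColex_le_toColex_of_subset h)
  have hdet : Z.det = 1 := by
    rw [det_of_isLowerTriangular Z hZ]
    simp [Z]
  have hsub : (Matrix.of fun s t : Finset α => if s ∪ t = univ then (1 : K) else 0) =
      Z.submatrix toColex ((compl_involutive.toPerm _).trans toColex) := by
    ext s t
    simp [Z, eq_univ_iff_forall, subset_iff, or_iff_not_imp_right]
  rw [hsub, rank_submatrix, rank_of_det_ne_zero (hdet ▸ one_ne_zero), Fintype.ofEquiv_card,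
    Fintype.card_finset]

theorem NFA.Unambiguous.two_pow_card_le_card_add_one {α σ : Type*} [Fintype α] [LinearOrder α]
    [Fintype σ] {M : NFA α σ} (hM : M.Unambiguous) (hL : M.accepts = {x | ∃ a, a ∉ x}) :
    2 ^ Fintype.card α ≤ Fintype.card σ + 1 := by
  classical
  have hmem (w : List α) : w ∈ M.accepts ↔ ∃ a, a ∉ w := by rw [hL]; rfl
  have hrej : (Matrix.of fun s t : Finset α =>
      if s.toList ++ t.toList ∈ M.accepts then (0 : ℚ) else 1) =
      Matrix.of fun s t => if s ∪ t = univ then 1 else 0 := by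
    ext s t
    simp only [of_apply, hmem, List.mem_append, mem_toList, eq_univ_iff_forall, mem_union]
    split_ifs <;> grind
  rw [← rank_ite_union_eq_univ ℚ α, ← hrej]
  exact hM.rank_ite_append_mem_accepts_le ℚ _ _

section MissingLetter

variable (α : Type*)

@[simps]
def missingLetterNFA : NFA α α where
  step q a := {p | p = q ∧ a ≠ q}
  start := Set.univ
  accept := Set.univ

variable {α}

theorem mem_missingLetterNFA_eval {w : List α} {q : α} :
    q ∈ (missingLetterNFA α).eval w ↔ q ∉ w := by
  induction w using List.reverseRecOn with
  | nil => simp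
  | append_singleton w a ih => simp [NFA.mem_stepSet, ih, eq_comm]

theorem missingLetterNFA_accepts : (missingLetterNFA α).accepts = {x | ∃ a, a ∉ x} := by
  ext w
  simp only [NFA.mem_accepts, missingLetterNFA_accept, Set.mem_univ, true_and]
  exact exists_congr fun q => mem_missingLetterNFA_eval

end MissingLetter

section LettersSeen

variable (α : Type*) [Fintype α] [DecidableEq α]

@[simps]
def lettersSeenNFA : NFA α {s : Finset α // s ≠ univ} where
  step s a := {t | t.1 = insert a s.1}
  start := {t | t.1 = ∅}
  accept := Set.univ

variable {α}

theorem mem_lettersSeenNFA_eval {w : List α} {t : {s : Finset α // s ≠ univ}} :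
    t ∈ (lettersSeenNFA α).eval w ↔ t.1 = w.toFinset := by
  induction w using List.reverseRecOn generalizing t with
  | nil => simp
  | append_singleton w a ih =>
    have hwa : (w ++ [a]).toFinset = insert a w.toFinset := by
      simp
    simp only [NFA.eval_append_singleton, NFA.mem_stepSet, ih, lettersSeenNFA_step,
      Set.mem_ofPred_eq, hwa]
    refine ⟨fun ⟨s, hs, ht⟩ => hs ▸ ht, fun ht => ⟨⟨w.toFinset, fun hw => t.2 ?_⟩, rfl, ht⟩⟩
    rw [ht, hw, insert_eq_of_mem (mem_univ a)]

theorem lettersSeenNFA_accepts : (lettersSeenNFA α).accepts = {x | ∃ a, a ∉ x} := by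
  ext w
  simp only [NFA.mem_accepts, lettersSeenNFA_accept, Set.mem_univ, true_and]
  change (∃ t, t ∈ (lettersSeenNFA α).eval w) ↔ ∃ a, a ∉ w
  simp [mem_lettersSeenNFA_eval, eq_univ_iff_forall]

theorem lettersSeenNFA_deterministic [Nonempty α] : (lettersSeenNFA α).Deterministic := by
  refine ⟨⟨⟨∅, univ_nonempty.ne_empty.symm⟩, ?_⟩,
    fun s a t₁ (h₁ : t₁.1 = _) t₂ (h₂ : t₂.1 = _) => Subtype.ext (h₁.trans h₂.symm)⟩
  ext t
  simp [Subtype.ext_iff]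

theorem card_subtype_ne_univ :
    Fintype.card {s : Finset α // s ≠ univ} = 2 ^ Fintype.card α - 1 := by
  rw [Fintype.card_subtype_compl, Fintype.card_finset, Fintype.card_subtype_eq]

end LettersSeen

/-- Over `Σ_n = Fin n` (`n ≥ 1`), the downward-closed language `Σ_n* \ U_n` of all
words not using all `n` letters is recognized by an NFA with `n` states, while every
unambiguous automaton recognizing it has at least `2^n - 1` states; in fact
`nU = nD = 2^n - 1`. -/
theorem complement_U_complexity (n : ℕ) (hn : 1 ≤ n) (L : Language (Fin n))
    (hL : L = {x | ∃ a : Fin n, a ∉ x}) :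
    nN L ≤ n ∧
    (∀ (σ : Type) [Fintype σ] (M : NFA (Fin n) σ),
      M.Unambiguous → M.accepts = L → 2 ^ n - 1 ≤ Fintype.card σ) ∧
    nU L = 2 ^ n - 1 ∧ nD L = 2 ^ n - 1 := by
  subst hL
  have : Nonempty (Fin n) := ⟨⟨0, hn⟩⟩
  have hUFA (σ : Type) [Fintype σ] (M : NFA (Fin n) σ) (hM : M.Unambiguous)
      (hacc : M.accepts = {x | ∃ a : Fin n, a ∉ x}) : 2 ^ n - 1 ≤ Fintype.card σ := by
    have := hM.two_pow_card_le_card_add_one hacc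
    rw [Fintype.card_fin] at this
    omega
  have hcard : Fintype.card {s : Finset (Fin n) // s ≠ univ} = 2 ^ n - 1 := by
    rw [card_subtype_ne_univ, Fintype.card_fin]
  refine ⟨Nat.sInf_le ⟨Fin n, _, missingLetterNFA _, Fintype.card_fin n,
    missingLetterNFA_accepts⟩, hUFA, ?_, ?_⟩
  · refine IsLeast.csInf_eq ⟨⟨_, _, lettersSeenNFA _,
      lettersSeenNFA_deterministic.unambiguous, hcard, lettersSeenNFA_accepts⟩, ?_⟩
    rintro _ ⟨σ, _, M, hM, rfl, hacc⟩
    exact hUFA σ M hM hacc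
  · refine IsLeast.csInf_eq ⟨⟨_, _, lettersSeenNFA _,
      lettersSeenNFA_deterministic, hcard, lettersSeenNFA_accepts⟩, ?_⟩
    rintro _ ⟨σ, _, M, hM, rfl, hacc⟩
    exact hUFA σ M hM.unambiguous hacc
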